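/- Let v_1 ∈ D2 be a unit vector. Then: (i) for any unit vector u_1 ∈ span{v_1} ⊕ V_{v_1}(0) one has span{v_1} ⊕ V_{v_1}(0) = span{u_1} ⊕ V_{u_1}(0); and (ii) for any two orthonormal vectors u_1, ũ_1 ∈ span{v_1} ⊕ V_{v_1}(0) one has L(u_1, ũ_1) = 0. -/

import Mathlib

/-!
Since `e₁` maximises the cubic form `f` on the unit sphere, the first variation of `f` at `e₁`
vanishes, so `K(e₁,e₁) = λ₁e₁`. Evaluating the parallelism identity at `X = e₁`, `Y = v ∈ D₂`
and dividing by `η` gives the cyclic identity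
`K(u,L(v,z)) + K(z,L(v,u)) + K(v,L(z,u)) = (λ₁η/2)(⟨z,u⟩v + ⟨v,z⟩u + ⟨v,u⟩z)` on `D₂`.
With `v = z = p` a unit vector it shows that `span{p} ⊕ V_p(0)` is exactly the eigenspace of
`K(·, L(p,p))` in `D₂` for the eigenvalue `λ₁η/2`. Since `⟨P_p q, q⟩ = ‖L(p,q)‖²`, a norm
computation gives `L(u,u) = L(p,p)` for every unit `u` in this eigenspace, so `u` determines the
same eigenspace as `p`, which is (i). For orthonormal `u, ũ` in it, (i) puts `ũ` in `V_u(0)`, and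
`P_u ũ = 0` forces `L(u,ũ) = 0`, which is (ii).
-/

open scoped RealInnerProductSpace
open Module Submodule

noncomputable section

variable {V : Type*} [NormedAddCommGroup V] [InnerProductSpace ℝ V]

/-- The curvature-type operator built from `ε` and the difference tensor `K`:
`R(X,Y)Z = ε(⟨Y,Z⟩X − ⟨X,Z⟩Y) − K(X,K(Y,Z)) + K(Y,K(X,Z))`. -/
def Rc (ε : ℝ) (K : V →ₗ[ℝ] V →ₗ[ℝ] V) (X Y Z : V) : V :=
  ε • (⟪Y, Z⟫ • X - ⟪X, Z⟫ • Y) - K X (K Y Z) + K Y (K X Z)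

/-- The bilinear map `L(v₁,v₂) = K(v₁,v₂) − (λ₁/2)⟨v₁,v₂⟩ e₁`. -/
def Lop (lam1 : ℝ) (e1 : V) (K : V →ₗ[ℝ] V →ₗ[ℝ] V) (v1 v2 : V) : V :=
  K v1 v2 - (lam1 / 2 * ⟪v1, v2⟫) • e1

/-- The distribution `D₂ = {v : v ⟂ e₁, K(e₁,v) = (λ₁/2)v}`. -/
def D2s (lam1 : ℝ) (e1 : V) (K : V →ₗ[ℝ] V →ₗ[ℝ] V) : Submodule ℝ V :=
  (ℝ ∙ e1)ᗮ ⊓ Module.End.eigenspace (K e1) (lam1 / 2)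

/-- The distribution `D₃ = {w : w ⟂ e₁, K(e₁,w) = μw}`. -/
def D3s (mu : ℝ) (e1 : V) (K : V →ₗ[ℝ] V →ₗ[ℝ] V) : Submodule ℝ V :=
  (ℝ ∙ e1)ᗮ ⊓ Module.End.eigenspace (K e1) mu

/-- The operator `P_v(ṽ) = K(v, L(v,ṽ))`, as a linear endomorphism of `V`. -/
def Pop (lam1 : ℝ) (e1 : V) (K : V →ₗ[ℝ] V →ₗ[ℝ] V) (v : V) : V →ₗ[ℝ] V :=
  (K v) ∘ₗ (K v - (lam1 / 2) •
    ((LinearMap.toSpanSingleton ℝ V e1) ∘ₗ (innerSL ℝ v).toLinearMap))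

/-- The eigenspace `V_v(c)` of `P_v` within the orthogonal complement of `v` in `D₂`. -/
def Vvs (lam1 c : ℝ) (e1 : V) (K : V →ₗ[ℝ] V →ₗ[ℝ] V) (v : V) : Submodule ℝ V :=
  D2s lam1 e1 K ⊓ (ℝ ∙ v)ᗮ ⊓ Module.End.eigenspace (Pop lam1 e1 K v) c

section CubicForm

variable {K : V →ₗ[ℝ] V →ₗ[ℝ] V}

lemma eq_zero_of_forall_quartic_nonpos {a b c d : ℝ}
    (h : ∀ t : ℝ, a * t + b * t ^ 2 + c * t ^ 3 + d * t ^ 4 ≤ 0) : a = 0 := by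
  have hmax : IsLocalMax (fun t : ℝ ↦ a * t + b * t ^ 2 + c * t ^ 3 + d * t ^ 4) 0 :=
    Filter.Eventually.of_forall fun t ↦ by simpa using h t
  have hderiv : HasDerivAt (fun t : ℝ ↦ a * t + b * t ^ 2 + c * t ^ 3 + d * t ^ 4) a 0 := by
    simpa using ((((hasDerivAt_id (0 : ℝ)).const_mul a).fun_add
      ((hasDerivAt_pow 2 (0 : ℝ)).const_mul b)).fun_add
      ((hasDerivAt_pow 3 (0 : ℝ)).const_mul c)).fun_add ((hasDerivAt_pow 4 (0 : ℝ)).const_mul d)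
  exact hmax.hasDerivAt_eq_zero hderiv

lemma inner_apply_self_le_mul_norm_pow {lam : ℝ} (hmax : ∀ u : V, ‖u‖ = 1 → ⟪K u u, u⟫ ≤ lam)
    (u : V) : ⟪K u u, u⟫ ≤ lam * ‖u‖ ^ 3 := by
  rcases eq_or_ne u 0 with rfl | hu
  · simp
  have hr : 0 < ‖u‖ := norm_pos_iff.mpr hu
  have hunit : ‖‖u‖⁻¹ • u‖ = 1 := by rw [norm_smul, norm_inv, norm_norm, inv_mul_cancel₀ hr.ne']
  have hu_eq : u = ‖u‖ • ‖u‖⁻¹ • u := by rw [smul_smul, mul_inv_cancel₀ hr.ne', one_smul]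
  calc ⟪K u u, u⟫ = ‖u‖ ^ 3 * ⟪K (‖u‖⁻¹ • u) (‖u‖⁻¹ • u), ‖u‖⁻¹ • u⟫ := by
        conv_lhs => rw [hu_eq]
        simp only [map_smul, LinearMap.smul_apply, real_inner_smul_left, real_inner_smul_right]
        ring
    _ ≤ ‖u‖ ^ 3 * lam := by gcongr; exact hmax _ hunit
    _ = lam * ‖u‖ ^ 3 := mul_comm _ _

lemma inner_apply_self_eq_zero_of_forall_le (hKsymm : ∀ X Y : V, K X Y = K Y X)
    (hKcub : ∀ X Y Z : V, ⟪K X Y, Z⟫ = ⟪K X Z, Y⟫) {e1 : V} (he1 : ‖e1‖ = 1)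
    (hmax : ∀ u : V, ‖u‖ = 1 → ⟪K u u, u⟫ ≤ ⟪K e1 e1, e1⟫) {w : V} (hw : ⟪e1, w⟫ = 0) :
    ⟪K e1 e1, w⟫ = 0 := by
  set lam := ⟪K e1 e1, e1⟫
  have hlam : 0 ≤ lam := by
    have h := hmax (-e1) (by rw [norm_neg, he1])
    simp only [map_neg, LinearMap.neg_apply, neg_neg, inner_neg_right] at h
    linarith
  -- `f(e₁ + t w) ≤ λ‖e₁ + t w‖³ ≤ λ(1 + t²‖w‖²)²` is a quartic inequality in `t`, with equality
  -- at `t = 0`.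
  have hbound (t : ℝ) : 3 * ⟪K e1 e1, w⟫ * t + (3 * ⟪K e1 w, w⟫ - 2 * lam * ‖w‖ ^ 2) * t ^ 2
      + ⟪K w w, w⟫ * t ^ 3 + (-lam * ‖w‖ ^ 4) * t ^ 4 ≤ 0 := by
    set s := 1 + t ^ 2 * ‖w‖ ^ 2
    have hnorm_sq : ‖e1 + t • w‖ ^ 2 = s := by
      rw [norm_add_sq_real, real_inner_smul_right, hw, norm_smul, he1, Real.norm_eq_abs,
        mul_pow, sq_abs]
      ring
    have hnorm_cube : ‖e1 + t • w‖ ^ 3 ≤ s ^ 2 := by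
      have h1 : 1 ≤ ‖e1 + t • w‖ := by nlinarith [norm_nonneg (e1 + t • w), sq_nonneg (t * ‖w‖)]
      nlinarith [norm_nonneg (e1 + t • w)]
    have hexpand : ⟪K (e1 + t • w) (e1 + t • w), e1 + t • w⟫
        = lam + 3 * ⟪K e1 e1, w⟫ * t + 3 * ⟪K e1 w, w⟫ * t ^ 2 + ⟪K w w, w⟫ * t ^ 3 := by
      simp only [map_add, map_smul, LinearMap.add_apply, LinearMap.smul_apply, inner_add_left,
        inner_add_right, real_inner_smul_left, real_inner_smul_right, hKsymm w e1,
        hKcub e1 w e1, hKcub w w e1]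
      ring
    have := (inner_apply_self_le_mul_norm_pow hmax (e1 + t • w)).trans
      (mul_le_mul_of_nonneg_left hnorm_cube hlam)
    rw [hexpand] at this
    linear_combination this
  have := eq_zero_of_forall_quartic_nonpos hbound
  linarith

lemma apply_self_eq_smul_of_forall_le (hKsymm : ∀ X Y : V, K X Y = K Y X)
    (hKcub : ∀ X Y Z : V, ⟪K X Y, Z⟫ = ⟪K X Z, Y⟫) {e1 : V} (he1 : ‖e1‖ = 1)
    (hmax : ∀ u : V, ‖u‖ = 1 → ⟪K u u, u⟫ ≤ ⟪K e1 e1, e1⟫) :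
    K e1 e1 = ⟪K e1 e1, e1⟫ • e1 := by
  set d := K e1 e1 - ⟪K e1 e1, e1⟫ • e1
  have hd : ⟪e1, d⟫ = 0 := by
    rw [inner_sub_right, real_inner_smul_right,
    inner_self_eq_one_of_norm_eq_one he1, real_inner_comm, mul_one, sub_self]
  have hdd : ⟪d, d⟫ = 0 := by
    rw [inner_sub_left, real_inner_smul_left, hd, mul_zero, sub_zero]
    exact inner_apply_self_eq_zero_of_forall_le hKsymm hKcub he1 hmax hd
  exact sub_eq_zero.mp (inner_self_eq_zero.mp hdd)

end CubicForm

section Splitting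

variable {ε lam1 η μ : ℝ} {e1 : V} {K : V →ₗ[ℝ] V →ₗ[ℝ] V}

lemma mem_D2s_iff {v : V} : v ∈ D2s lam1 e1 K ↔ ⟪e1, v⟫ = 0 ∧ K e1 v = (lam1 / 2) • v := by
  rw [D2s, mem_inf, mem_orthogonal_singleton_iff_inner_right, Module.End.mem_eigenspace_iff]

lemma mem_D3s_iff {w : V} : w ∈ D3s μ e1 K ↔ ⟪e1, w⟫ = 0 ∧ K e1 w = μ • w := by
  rw [D3s, mem_inf, mem_orthogonal_singleton_iff_inner_right, Module.End.mem_eigenspace_iff]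

lemma Pop_apply (v x : V) : Pop lam1 e1 K v x = K v (Lop lam1 e1 K v x) := by
  simp [Pop, Lop, LinearMap.toSpanSingleton_apply, smul_smul]

lemma apply_eq_Lop_add (x y : V) : K x y = Lop lam1 e1 K x y + (lam1 / 2 * ⟪x, y⟫) • e1 := by
  rw [Lop, sub_add_cancel]

lemma Rc_add_smul (X Y a b : V) (c : ℝ) :
    Rc ε K X Y (a + c • b) = Rc ε K X Y a + c • Rc ε K X Y b := by
  simp only [Rc, inner_add_right, real_inner_smul_right, map_add, map_smul]
  module

/-- The pointwise algebraic data of Case `C_m`, with `η = ½√(λ₁² − 4ε)` and `μ = λ₁/2 − η`. -/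
structure IsParallelSplitting (ε lam1 η μ : ℝ) (e1 : V) (K : V →ₗ[ℝ] V →ₗ[ℝ] V) : Prop where
  symm : ∀ X Y : V, K X Y = K Y X
  inner_comm : ∀ X Y Z : V, ⟪K X Y, Z⟫ = ⟪K X Z, Y⟫
  parallel : ∀ X Y Z U : V, Rc ε K X Y (K Z U) = K (Rc ε K X Y Z) U + K Z (Rc ε K X Y U)
  inner_e1_self : ⟪e1, e1⟫ = 1
  apply_e1_e1 : K e1 e1 = lam1 • e1
  eps_eq : ε = lam1 ^ 2 / 4 - η ^ 2
  mu_eq : μ = lam1 / 2 - η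
  eta_ne_zero : η ≠ 0
  Lop_mem_D3s : ∀ v ∈ D2s lam1 e1 K, ∀ w ∈ D2s lam1 e1 K, Lop lam1 e1 K v w ∈ D3s μ e1 K
  apply_mem_D2s : ∀ v ∈ D2s lam1 e1 K, ∀ w ∈ D3s μ e1 K, K v w ∈ D2s lam1 e1 K

namespace IsParallelSplitting

lemma Rc_e1_e1 (h : IsParallelSplitting ε lam1 η μ e1 K) {p : V} (hp : p ∈ D2s lam1 e1 K) :
    Rc ε K e1 p e1 = η ^ 2 • p := by
  obtain ⟨hpe, hpK⟩ := mem_D2s_iff.mp hp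
  have hKpe : K p e1 = (lam1 / 2) • p := by rw [h.symm, hpK]
  simp only [Rc, real_inner_comm e1 p, hpe, h.inner_e1_self, h.apply_e1_e1, hKpe, map_smul, hpK,
    h.eps_eq]
  module

lemma Rc_e1_D2s (h : IsParallelSplitting ε lam1 η μ e1 K) {p q : V} (hp : p ∈ D2s lam1 e1 K)
    (hq : q ∈ D2s lam1 e1 K) :
    Rc ε K e1 p q = (-(η ^ 2) * ⟪p, q⟫) • e1 + η • Lop lam1 e1 K p q := by
  obtain ⟨hqe, hqK⟩ := mem_D2s_iff.mp hq
  have hLK := (mem_D3s_iff.mp (h.Lop_mem_D3s p hp q hq)).2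
  simp only [Rc, hqe, hqK, apply_eq_Lop_add (lam1 := lam1) (e1 := e1) p q, map_add, map_smul,
    hLK, h.apply_e1_e1, h.eps_eq, h.mu_eq]
  module

lemma inner_eq_zero_of_mem_D2s_of_mem_D3s (h : IsParallelSplitting ε lam1 η μ e1 K) {p w : V}
    (hp : p ∈ D2s lam1 e1 K) (hw : w ∈ D3s μ e1 K) : ⟪p, w⟫ = 0 := by
  have hsymm := h.inner_comm e1 p w
  rw [(mem_D2s_iff.mp hp).2, (mem_D3s_iff.mp hw).2, real_inner_smul_left, real_inner_smul_left,
    real_inner_comm p w, h.mu_eq] at hsymm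
  have : η * ⟪p, w⟫ = 0 := by linear_combination hsymm
  exact (mul_eq_zero.mp this).resolve_left h.eta_ne_zero

lemma Rc_e1_D3s (h : IsParallelSplitting ε lam1 η μ e1 K) {p w : V} (hp : p ∈ D2s lam1 e1 K)
    (hw : w ∈ D3s μ e1 K) : Rc ε K e1 p w = (-η) • K p w := by
  simp only [Rc, h.inner_eq_zero_of_mem_D2s_of_mem_D3s hp hw, (mem_D3s_iff.mp hw).1,
    (mem_D3s_iff.mp hw).2, (mem_D2s_iff.mp (h.apply_mem_D2s p hp w hw)).2, map_smul, h.mu_eq]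
  module

/-- The parallelism identity with `X = e₁` and `Y = v`, after dividing by `η`. -/
lemma apply_Lop_cyclic (h : IsParallelSplitting ε lam1 η μ e1 K) {v z u : V}
    (hv : v ∈ D2s lam1 e1 K) (hz : z ∈ D2s lam1 e1 K) (hu : u ∈ D2s lam1 e1 K) :
    K u (Lop lam1 e1 K v z) + K z (Lop lam1 e1 K v u) + K v (Lop lam1 e1 K z u)
      = (lam1 * η / 2) • (⟪z, u⟫ • v + ⟪v, z⟫ • u + ⟪v, u⟫ • z) := by
  have hpar := h.parallel e1 v z u
  rw [apply_eq_Lop_add (lam1 := lam1) (e1 := e1) z u, Rc_add_smul,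
    h.Rc_e1_D3s hv (h.Lop_mem_D3s z hz u hu), h.Rc_e1_e1 hv, h.Rc_e1_D2s hv hz,
    h.Rc_e1_D2s hv hu] at hpar
  simp only [map_add, map_smul, LinearMap.add_apply, LinearMap.smul_apply,
    h.symm (Lop lam1 e1 K v z) u, h.symm z e1, (mem_D2s_iff.mp hu).2, (mem_D2s_iff.mp hz).2] at hpar
  apply smul_right_injective V h.eta_ne_zero
  linear_combination (norm := module) -hpar

lemma apply_Lop_self_add (h : IsParallelSplitting ε lam1 η μ e1 K) {p q : V}
    (hp : p ∈ D2s lam1 e1 K) (hq : q ∈ D2s lam1 e1 K) :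
    K q (Lop lam1 e1 K p p) + (2 : ℝ) • K p (Lop lam1 e1 K p q)
      = (lam1 * η / 2) • ((2 * ⟪p, q⟫) • p + ⟪p, p⟫ • q) := by
  linear_combination (norm := module) h.apply_Lop_cyclic hp hp hq

lemma apply_Lop_self (h : IsParallelSplitting ε lam1 η μ e1 K) {p : V}
    (hp : p ∈ D2s lam1 e1 K) :
    K p (Lop lam1 e1 K p p) = (lam1 * η / 2 * ⟪p, p⟫) • p := by
  linear_combination (norm := module) (3 : ℝ)⁻¹ • h.apply_Lop_cyclic hp hp hp

lemma inner_apply_Lop (h : IsParallelSplitting ε lam1 η μ e1 K) {p q : V}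
    (hp : p ∈ D2s lam1 e1 K) (hq : q ∈ D2s lam1 e1 K) :
    ⟪K p (Lop lam1 e1 K p q), q⟫ = ⟪Lop lam1 e1 K p q, Lop lam1 e1 K p q⟫ := by
  rw [h.inner_comm, apply_eq_Lop_add (lam1 := lam1) (e1 := e1) p q, inner_add_left,
    real_inner_smul_left, (mem_D3s_iff.mp (h.Lop_mem_D3s p hp q hq)).1, mul_zero, add_zero]

lemma Lop_eq_zero_of_apply_Lop_eq_zero (h : IsParallelSplitting ε lam1 η μ e1 K) {p q : V}
    (hp : p ∈ D2s lam1 e1 K) (hq : q ∈ D2s lam1 e1 K) (hPq : K p (Lop lam1 e1 K p q) = 0) :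
    Lop lam1 e1 K p q = 0 := by
  have hnorm := h.inner_apply_Lop hp hq
  rw [hPq, inner_zero_left] at hnorm
  exact inner_self_eq_zero.mp hnorm.symm

lemma Vvs_zero_eq (h : IsParallelSplitting ε lam1 η μ e1 K) {p : V} (hp : p ∈ D2s lam1 e1 K)
    (hpu : ‖p‖ = 1) :
    Vvs lam1 0 e1 K p = (ℝ ∙ p)ᗮ ⊓
      (D2s lam1 e1 K ⊓ Module.End.eigenspace (K (Lop lam1 e1 K p p)) (lam1 * η / 2)) := by
  ext z
  simp only [Vvs, mem_inf, Module.End.mem_eigenspace_iff, Pop_apply, zero_smul]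
  have hsum (hz : z ∈ D2s lam1 e1 K) (hzp : z ∈ (ℝ ∙ p)ᗮ) :
      K (Lop lam1 e1 K p p) z + (2 : ℝ) • K p (Lop lam1 e1 K p z) = (lam1 * η / 2) • z := by
    rw [h.symm, h.apply_Lop_self_add hp hz, mem_orthogonal_singleton_iff_inner_right.mp hzp,
      inner_self_eq_one_of_norm_eq_one hpu]
    module
  constructor
  · rintro ⟨⟨hz, hzp⟩, hPz⟩
    exact ⟨hzp, hz, by linear_combination (norm := module) hsum hz hzp - (2 : ℝ) • hPz⟩
  · rintro ⟨hzp, hz, hzE⟩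
    refine ⟨⟨hz, hzp⟩, ?_⟩
    linear_combination (norm := module) (2 : ℝ)⁻¹ • (hsum hz hzp - hzE)

lemma sup_Vvs_zero_eq (h : IsParallelSplitting ε lam1 η μ e1 K) {p : V}
    (hp : p ∈ D2s lam1 e1 K) (hpu : ‖p‖ = 1) :
    (ℝ ∙ p) ⊔ Vvs lam1 0 e1 K p
      = D2s lam1 e1 K ⊓ Module.End.eigenspace (K (Lop lam1 e1 K p p)) (lam1 * η / 2) := by
  rw [h.Vvs_zero_eq hp hpu]
  refine sup_orthogonal_inf_of_hasOrthogonalProjection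
    ((span_singleton_le_iff_mem _ _).mpr ⟨hp, ?_⟩)
  rw [SetLike.mem_coe, Module.End.mem_eigenspace_iff, h.symm, h.apply_Lop_self hp,
    inner_self_eq_one_of_norm_eq_one hpu, mul_one]

lemma Lop_self_eq_of_mem_eigenspace (h : IsParallelSplitting ε lam1 η μ e1 K) {p z : V}
    (hp : p ∈ D2s lam1 e1 K) (hpu : ‖p‖ = 1) (hz : z ∈ D2s lam1 e1 K) (hzu : ‖z‖ = 1)
    (hzE : K (Lop lam1 e1 K p p) z = (lam1 * η / 2) • z) :
    Lop lam1 e1 K z z = Lop lam1 e1 K p p := by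
  have hpp := h.inner_apply_Lop hp hp
  have hzz := h.inner_apply_Lop hz hz
  rw [h.apply_Lop_self hp, real_inner_smul_left, inner_self_eq_one_of_norm_eq_one hpu] at hpp
  rw [h.apply_Lop_self hz, real_inner_smul_left, inner_self_eq_one_of_norm_eq_one hzu] at hzz
  have hcross : ⟪Lop lam1 e1 K z z, Lop lam1 e1 K p p⟫ = lam1 * η / 2 := by
    rw [Lop, inner_sub_left, real_inner_smul_left, (mem_D3s_iff.mp (h.Lop_mem_D3s p hp p hp)).1,
      h.inner_comm, h.symm, hzE, real_inner_smul_left, inner_self_eq_one_of_norm_eq_one hzu]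
    ring
  have hdist : ‖Lop lam1 e1 K z z - Lop lam1 e1 K p p‖ ^ 2 = 0 := by
    rw [norm_sub_sq_real, ← real_inner_self_eq_norm_sq, ← real_inner_self_eq_norm_sq, hcross,
      ← hpp, ← hzz]
    ring
  simpa [sub_eq_zero] using hdist

lemma sup_Vvs_zero_eq_of_mem (h : IsParallelSplitting ε lam1 η μ e1 K) {p u : V}
    (hp : p ∈ D2s lam1 e1 K) (hpu : ‖p‖ = 1) (hu : u ∈ (ℝ ∙ p) ⊔ Vvs lam1 0 e1 K p)
    (huu : ‖u‖ = 1) :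
    (ℝ ∙ p) ⊔ Vvs lam1 0 e1 K p = (ℝ ∙ u) ⊔ Vvs lam1 0 e1 K u := by
  rw [h.sup_Vvs_zero_eq hp hpu] at hu ⊢
  obtain ⟨huD2, huE⟩ := hu
  rw [h.sup_Vvs_zero_eq huD2 huu,
    h.Lop_self_eq_of_mem_eigenspace hp hpu huD2 huu (Module.End.mem_eigenspace_iff.mp huE)]

lemma Lop_eq_zero_of_mem_sup_Vvs (h : IsParallelSplitting ε lam1 η μ e1 K) {p u u' : V}
    (hp : p ∈ D2s lam1 e1 K) (hpu : ‖p‖ = 1) (hu : u ∈ (ℝ ∙ p) ⊔ Vvs lam1 0 e1 K p)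
    (hu' : u' ∈ (ℝ ∙ p) ⊔ Vvs lam1 0 e1 K p) (huu : ‖u‖ = 1) (horth : ⟪u, u'⟫ = 0) :
    Lop lam1 e1 K u u' = 0 := by
  have huD2 : u ∈ D2s lam1 e1 K := by
    rw [h.sup_Vvs_zero_eq hp hpu] at hu
    exact hu.1
  rw [h.sup_Vvs_zero_eq_of_mem hp hpu hu huu, h.sup_Vvs_zero_eq huD2 huu] at hu'
  have hV : u' ∈ Vvs lam1 0 e1 K u := by
    rw [h.Vvs_zero_eq huD2 huu]
    exact ⟨mem_orthogonal_singleton_iff_inner_right.mpr horth, hu'⟩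
  have hPu' := Module.End.mem_eigenspace_iff.mp hV.2
  rw [Pop_apply, zero_smul] at hPu'
  exact h.Lop_eq_zero_of_apply_Lop_eq_zero huD2 hV.1.1 hPu'

end IsParallelSplitting

end Splitting

theorem stmt_15_general {V : Type*} [NormedAddCommGroup V] [InnerProductSpace ℝ V]
    (ε : ℝ)
    (K : V →ₗ[ℝ] V →ₗ[ℝ] V)
    (hKsymm : ∀ X Y : V, K X Y = K Y X)
    (hKcub : ∀ X Y Z : V, ⟪K X Y, Z⟫ = ⟪K X Z, Y⟫)
    (hpar : ∀ X Y Z U : V,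
      Rc ε K X Y (K Z U) = K (Rc ε K X Y Z) U + K Z (Rc ε K X Y U))
    (e1 : V) (he1 : ‖e1‖ = 1)
    (lam1 η μ : ℝ)
    (hlam1 : lam1 = ⟪K e1 e1, e1⟫)
    (hmax : ∀ u : V, ‖u‖ = 1 → ⟪K u u, u⟫ ≤ lam1)
    (hdisc : 0 < lam1 ^ 2 - 4 * ε)
    (hη : η = Real.sqrt (lam1 ^ 2 - 4 * ε) / 2)
    (hμ : μ = (lam1 - Real.sqrt (lam1 ^ 2 - 4 * ε)) / 2)
    (hLD3 : ∀ v1 ∈ D2s lam1 e1 K, ∀ v2 ∈ D2s lam1 e1 K,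
      Lop lam1 e1 K v1 v2 ∈ D3s μ e1 K)
    (hKD2 : ∀ v ∈ D2s lam1 e1 K, ∀ w ∈ D3s μ e1 K, K v w ∈ D2s lam1 e1 K)
    (v1 : V) (hv1 : v1 ∈ D2s lam1 e1 K) (hv1u : ‖v1‖ = 1) :
    (∀ u1 : V, ‖u1‖ = 1 → u1 ∈ (ℝ ∙ v1) ⊔ Vvs lam1 0 e1 K v1 →
      (ℝ ∙ v1) ⊔ Vvs lam1 0 e1 K v1 = (ℝ ∙ u1) ⊔ Vvs lam1 0 e1 K u1) ∧
    (∀ u1 ut1 : V, u1 ∈ (ℝ ∙ v1) ⊔ Vvs lam1 0 e1 K v1 →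
      ut1 ∈ (ℝ ∙ v1) ⊔ Vvs lam1 0 e1 K v1 →
      ‖u1‖ = 1 → ‖ut1‖ = 1 → ⟪u1, ut1⟫ = 0 → Lop lam1 e1 K u1 ut1 = 0) := by
  have hsqrt := Real.sq_sqrt hdisc.le
  have h : IsParallelSplitting ε lam1 η μ e1 K :=
    { symm := hKsymm
      inner_comm := hKcub
      parallel := hpar
      inner_e1_self := inner_self_eq_one_of_norm_eq_one he1
      apply_e1_e1 := by
        rw [hlam1]
        exact apply_self_eq_smul_of_forall_le hKsymm hKcub he1 (hlam1 ▸ hmax)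
      eps_eq := by rw [hη, div_pow, hsqrt]; ring
      mu_eq := by rw [hμ, hη]; ring
      eta_ne_zero := hη ▸ (div_pos (Real.sqrt_pos.mpr hdisc) two_pos).ne'
      Lop_mem_D3s := hLD3
      apply_mem_D2s := hKD2 }
  exact ⟨fun u1 hu1 hu1W ↦ h.sup_Vvs_zero_eq_of_mem hv1 hv1u hu1W hu1,
    fun u1 ut1 hu1W hut1W hu1 _ horth ↦ h.Lop_eq_zero_of_mem_sup_Vvs hv1 hv1u hu1W hut1W hu1 horth⟩

/-- Lemma 4.12: (i) for any unit vector `u₁ ∈ span{v₁} ⊕ V_{v₁}(0)` one has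
`span{v₁} ⊕ V_{v₁}(0) = span{u₁} ⊕ V_{u₁}(0)`; (ii) for orthonormal
`u₁, ũ₁ ∈ span{v₁} ⊕ V_{v₁}(0)` one has `L(u₁,ũ₁) = 0`. -/
theorem stmt_15 {V : Type*} [NormedAddCommGroup V] [InnerProductSpace ℝ V]
    (n m : ℕ) (hn : finrank ℝ V = n) (hn2 : 2 ≤ n)
    (ε : ℝ) (hε : ε = 1 ∨ ε = -1)
    (K : V →ₗ[ℝ] V →ₗ[ℝ] V)
    (hKsymm : ∀ X Y : V, K X Y = K Y X)
    (hKcub : ∀ X Y Z : V, ⟪K X Y, Z⟫ = ⟪K X Z, Y⟫)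
    (hpar : ∀ X Y Z U : V,
      Rc ε K X Y (K Z U) = K (Rc ε K X Y Z) U + K Z (Rc ε K X Y U))
    (e1 : V) (he1 : ‖e1‖ = 1)
    (lam1 η μ τ : ℝ)
    (hlam1 : lam1 = ⟪K e1 e1, e1⟫) (hlam1pos : 0 < lam1)
    (hmax : ∀ u : V, ‖u‖ = 1 → ⟪K u u, u⟫ ≤ lam1)
    (hdisc : 0 < lam1 ^ 2 - 4 * ε)
    (hη : η = Real.sqrt (lam1 ^ 2 - 4 * ε) / 2)
    (hμ : μ = (lam1 - Real.sqrt (lam1 ^ 2 - 4 * ε)) / 2)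
    (hτ : τ = η * (η + lam1 / 2) / 4)
    (hm2 : 2 ≤ m) (hmn : m ≤ n - 1)
    (hdimD2 : finrank ℝ (D2s lam1 e1 K) = m - 1)
    (hsplit : (ℝ ∙ e1) ⊔ D2s lam1 e1 K ⊔ D3s μ e1 K = ⊤)
    (hLD3 : ∀ v1 ∈ D2s lam1 e1 K, ∀ v2 ∈ D2s lam1 e1 K,
      Lop lam1 e1 K v1 v2 ∈ D3s μ e1 K)
    (hKD2 : ∀ v ∈ D2s lam1 e1 K, ∀ w ∈ D3s μ e1 K, K v w ∈ D2s lam1 e1 K)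
    (v1 : V) (hv1 : v1 ∈ D2s lam1 e1 K) (hv1u : ‖v1‖ = 1) :
    (∀ u1 : V, ‖u1‖ = 1 → u1 ∈ (ℝ ∙ v1) ⊔ Vvs lam1 0 e1 K v1 →
      (ℝ ∙ v1) ⊔ Vvs lam1 0 e1 K v1 = (ℝ ∙ u1) ⊔ Vvs lam1 0 e1 K u1) ∧
    (∀ u1 ut1 : V, u1 ∈ (ℝ ∙ v1) ⊔ Vvs lam1 0 e1 K v1 →
      ut1 ∈ (ℝ ∙ v1) ⊔ Vvs lam1 0 e1 K v1 →
      ‖u1‖ = 1 → ‖ut1‖ = 1 → ⟪u1, ut1⟫ = 0 → Lop lam1 e1 K u1 ut1 = 0) :=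
  stmt_15_general ε K hKsymm hKcub hpar e1 he1 lam1 η μ hlam1 hmax hdisc hη hμ hLD3 hKD2 v1 hv1 hv1u

end
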